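/- arXiv:1912.05775 — 2 statements merged into one kernel-verified Lean document; each statement's English description precedes it below -/
import Mathlib

section
/- Let T be a tree that has at least one end-palm, and let P_1, P_2, …, P_b be the end-palms of T (b ≥ 1). Then χ_L(T) ≤ 2 − 2b + Σ_{i=1}^{b} χ_L(P_i). -/
open SimpleGraph

/-- Distance from a vertex to a set of vertices, `d(u,S) = min {d(u,v) : v ∈ S}`. -/
noncomputable def distToSet {V : Type*} (G : SimpleGraph V) (u : V) (S : Set V) : ℕ :=
  sInf (G.dist u '' S)

/-- `c` is a locating coloring of `G` with `k` colors: a proper coloring such that any two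
distinct vertices are resolved by some color class. -/
def IsLocatingColoring {V : Type*} (G : SimpleGraph V) {k : ℕ} (c : V → Fin k) : Prop :=
  (∀ u v : V, G.Adj u v → c u ≠ c v) ∧
  ∀ u v : V, u ≠ v →
    ∃ i : Fin k, distToSet G u (c ⁻¹' {i}) ≠ distToSet G v (c ⁻¹' {i})

/-- The locating chromatic number `χ_L(G)`: the least `k` admitting a locating `k`-coloring. -/
noncomputable def locatingChromaticNumber {V : Type*} (G : SimpleGraph V) : ℕ :=
  sInf {k : ℕ | ∃ c : V → Fin k, IsLocatingColoring G c}

/-- A walk `p` from `u` to `v` is an *end-path* if it is a path joining a leaf `u` to its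
nearest branch `v`: `u` has degree 1, `v` has degree at least 3, and every internal
vertex of the path has degree 2. -/
def IsEndPath {V : Type*} [Fintype V] (T : SimpleGraph V) [DecidableRel T.Adj]
    {u v : V} (p : T.Walk u v) : Prop :=
  p.IsPath ∧ T.degree u = 1 ∧ 3 ≤ T.degree v ∧
    ∀ w ∈ p.support, w ≠ u → w ≠ v → T.degree w = 2

/-- A vertex is an *end-branch* if it is a branch at which at least two end-paths end. -/
def IsEndBranch {V : Type*} [Fintype V] (T : SimpleGraph V) [DecidableRel T.Adj]
    (v : V) : Prop :=
  ∃ (u₁ u₂ : V) (p₁ : T.Walk u₁ v) (p₂ : T.Walk u₂ v),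
    u₁ ≠ u₂ ∧ IsEndPath T p₁ ∧ IsEndPath T p₂

/-- The *end-palm* of an end-branch `v`: the vertex `v` together with all vertices of
the end-paths ending at `v`. -/
def endPalm {V : Type*} [Fintype V] (T : SimpleGraph V) [DecidableRel T.Adj]
    (v : V) : Set V :=
  {v} ∪ {w | ∃ (u : V) (p : T.Walk u v), IsEndPath T p ∧ w ∈ p.support}

/-!
Color `T` by a proper `2`-coloring `κ` outside the end-palms, and inside the end-palm at `v` by
an optimal locating coloring of the palm in which the colors of `v` and of one neighbour `n` of
`v` are renamed `κ v` and `κ n`, while the remaining colors stay private to the palm. This uses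
`2 + ∑ (χ_L(P_i) - 2)` colors. Seen from inside its palm, every renamed class is at the same
distance as in the palm, since `v` or `n` is at least as close as anything outside. A private
color class of the palm at `v` is at distance `d(u, v) + const` from every `u` outside that palm,
so two vertices that no class resolves have equal distances to all end-branches. In a tree this
forces them to be equal as soon as one of them lies on no end-palm: such a vertex lies on an
end-path hanging from a branch that is not an end-branch, and every other direction at that
branch leads to an end-branch.
-/

/-! ### Distance to a set -/

section distToSet

variable {V : Type*} {G : SimpleGraph V} {u v z : V} {S A B : Set V}

theorem distToSet_le_dist (hz : z ∈ S) : distToSet G u S ≤ G.dist u z :=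
  Nat.sInf_le ⟨z, hz, rfl⟩

theorem distToSet_eq_zero_of_mem (hu : u ∈ S) : distToSet G u S = 0 :=
  Nat.le_zero.mp (by simpa using distToSet_le_dist (G := G) (u := u) hu)

@[simp]
theorem distToSet_empty : distToSet G u ∅ = 0 := by
  simp [distToSet]

@[simp]
theorem distToSet_singleton : distToSet G u {z} = G.dist u z := by
  simp [distToSet]

theorem exists_mem_dist_eq_distToSet (hS : S.Nonempty) :
    ∃ z ∈ S, G.dist u z = distToSet G u S :=
  Nat.sInf_mem (hS.image (G.dist u))

theorem le_distToSet {n : ℕ} (hS : S.Nonempty) (h : ∀ z ∈ S, n ≤ G.dist u z) :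
    n ≤ distToSet G u S :=
  le_csInf (hS.image _) (by rintro _ ⟨z, hz, rfl⟩; exact h z hz)

theorem distToSet_eq_one_of_adj (hG : G.Connected) (hu : u ∉ S) (hz : z ∈ S) (h : G.Adj u z) :
    distToSet G u S = 1 := by
  refine le_antisymm ?_ (le_distToSet ⟨z, hz⟩ fun y hy ↦ hG.pos_dist_of_ne ?_)
  · exact (distToSet_le_dist hz).trans (dist_eq_one_iff_adj.mpr h).le
  · rintro rfl; exact hu hy

theorem distToSet_union_eq_left (hA : A.Nonempty) (hB : ∀ z ∈ B, distToSet G u A ≤ G.dist u z) :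
    distToSet G u (A ∪ B) = distToSet G u A := by
  obtain ⟨y, hy, hyu⟩ := exists_mem_dist_eq_distToSet (G := G) (u := u) hA
  refine le_antisymm (hyu ▸ distToSet_le_dist (Or.inl hy)) ?_
  refine le_distToSet (hA.mono Set.subset_union_left) ?_
  rintro z (hz | hz)
  exacts [distToSet_le_dist hz, hB z hz]

theorem distToSet_eq_add_of_forall_dist_eq {k : ℕ} (hS : S.Nonempty)
    (h : ∀ z ∈ S, G.dist u z = k + G.dist v z) :
    distToSet G u S = k + distToSet G v S := by
  obtain ⟨y, hy, hyv⟩ := exists_mem_dist_eq_distToSet (G := G) (u := v) hS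
  refine le_antisymm ?_ (le_distToSet hS fun z hz ↦ ?_)
  · simpa [← hyv, h y hy] using distToSet_le_dist (G := G) (u := u) hy
  · simpa [h z hz] using distToSet_le_dist (G := G) (u := v) hz

theorem distToSet_le_dist_add (hG : G.Connected) (hS : S.Nonempty) (u v : V) :
    distToSet G u S ≤ G.dist u v + distToSet G v S := by
  obtain ⟨y, hy, hyv⟩ := exists_mem_dist_eq_distToSet (G := G) (u := v) hS
  exact (distToSet_le_dist hy).trans (hyv ▸ hG.dist_triangle)

end distToSet

namespace SimpleGraph

variable {V : Type*} {G : SimpleGraph V}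

theorem Reachable.exists_adj_dist_eq_add_one {u v : V} (hr : G.Reachable u v) (huv : u ≠ v) :
    ∃ y, G.Adj u y ∧ G.dist v u = G.dist v y + 1 := by
  obtain ⟨p, hp⟩ := hr.exists_walk_length_eq_dist
  cases p with
  | nil => exact absurd rfl huv
  | cons h q =>
    refine ⟨_, h, ?_⟩
    have h₁ := dist_le q
    have h₂ := h.reachable.dist_triangle_left v
    rw [Walk.length_cons] at hp
    rw [dist_eq_one_iff_adj.mpr h] at h₂
    rw [dist_comm, dist_comm (u := v)]
    omega

theorem card_le_degree {x : V} [Fintype (G.neighborSet x)] {s : Finset V}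
    (hs : ∀ y ∈ s, G.Adj x y) : s.card ≤ G.degree x := by
  rw [← card_neighborFinset_eq_degree]
  exact Finset.card_le_card fun y hy ↦ (mem_neighborFinset _ _ _).mpr (hs y hy)

namespace Walk

theorem exists_adj_mem_support_of_ne [DecidableEq V] {u v x : V} {p : G.Walk u v}
    (hx : x ∈ p.support) (hxv : x ≠ v) : ∃ s, G.Adj x s ∧ s ∈ (p.dropUntil x hx).support.tail :=
  ⟨_, adj_snd (not_nil_of_ne hxv), snd_mem_tail_support (not_nil_of_ne hxv)⟩

theorem IsPath.disjoint_support_takeUntil_dropUntil [DecidableEq V] {u v x : V}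
    {p : G.Walk u v} (hp : p.IsPath) (hx : x ∈ p.support) :
    (p.takeUntil x hx).support.Disjoint (p.dropUntil x hx).support.tail :=
  List.disjoint_of_nodup_append <| by simpa [← support_append] using hp.support_nodup

theorem IsPath.exists_adj_adj_of_mem_support [DecidableEq V] {u v x : V} {p : G.Walk u v}
    (hp : p.IsPath) (hx : x ∈ p.support) (hxu : x ≠ u) (hxv : x ≠ v) :
    ∃ r s, r ≠ s ∧ G.Adj x r ∧ G.Adj x s ∧ r ∈ p.support ∧ s ∈ p.support := by
  obtain ⟨s, hs, hsp⟩ := exists_adj_mem_support_of_ne hx hxv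
  have hnil : ¬(p.takeUntil x hx).Nil := not_nil_of_ne (Ne.symm hxu)
  have hr : (p.takeUntil x hx).penultimate ∈ _ := getVert_mem_support _ _
  exact ⟨_, s, fun h ↦ hp.disjoint_support_takeUntil_dropUntil hx (h ▸ hr) hsp,
    (adj_penultimate hnil).symm, hs, p.support_takeUntil_subset_support hx hr,
    p.support_dropUntil_subset_support hx (List.mem_of_mem_tail hsp)⟩

theorem IsPath.two_le_degree [Fintype V] [DecidableRel G.Adj] {u v x : V} {p : G.Walk u v}
    (hp : p.IsPath) (hx : x ∈ p.support) (hxu : x ≠ u) (hxv : x ≠ v) : 2 ≤ G.degree x := by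
  classical
  obtain ⟨r, s, hrs, hr, hs, -, -⟩ := hp.exists_adj_adj_of_mem_support hx hxu hxv
  simpa [Finset.card_pair hrs] using card_le_degree (s := {r, s}) (by simp [hr, hs])

theorem length_induce {s : Set V} {u v : V} (p : G.Walk u v) (hp : ∀ x ∈ p.support, x ∈ s) :
    (p.induce s hp).length = p.length := by
  rw [← length_map (Embedding.induce s).toHom, map_induce]; rfl

end Walk

theorem dist_le_dist_induce {s : Set V} {x y : s} (h : (G.induce s).Reachable x y) :
    G.dist x y ≤ (G.induce s).dist x y := by
  obtain ⟨q, hq⟩ := h.exists_walk_length_eq_dist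
  rw [← hq, ← q.length_map (Embedding.induce s).toHom]
  exact dist_le _

def IsAttachedAt (G : SimpleGraph V) (S : Set V) (b : V) : Prop :=
  ∀ x ∈ S, x ≠ b → ∀ y, G.Adj x y → y ∈ S

theorem IsAttachedAt.mem_support {S : Set V} {b x z : V} (hS : G.IsAttachedAt S b)
    (hx : x ∈ S) (hz : z ∉ S) (p : G.Walk x z) : b ∈ p.support := by
  induction p with
  | nil => exact absurd hx hz
  | @cons x y _ h q ih =>
    by_cases hxb : x = b
    · simp [hxb]
    · simp [ih (hS x hx hxb y h) hz]

theorem IsAttachedAt.support_subset [DecidableEq V] {S : Set V} {b x y : V}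
    (hS : G.IsAttachedAt S b) (hb : b ∈ S) (hx : x ∈ S) (hy : y ∈ S) {p : G.Walk x y}
    (hp : p.IsPath) : ∀ m ∈ p.support, m ∈ S := by
  intro m hm
  by_contra hmS
  have h₁ := hS.mem_support hx hmS (p.takeUntil m hm)
  have h₂ := hS.mem_support hy hmS (p.dropUntil m hm).reverse
  rw [Walk.support_reverse, List.mem_reverse, ← Walk.cons_tail_support] at h₂
  rcases List.mem_cons.mp h₂ with rfl | h₂
  exacts [hmS hb, hp.disjoint_support_takeUntil_dropUntil hm h₁ h₂]

/-! ### Trees -/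

namespace IsTree

variable {T : SimpleGraph V} (hT : T.IsTree)
include hT

theorem isPath_unique {u v : V} {p q : T.Walk u v} (hp : p.IsPath) (hq : q.IsPath) : p = q :=
  (hT.existsUnique_path u v).unique hp hq

theorem length_eq_dist_of_isPath {u v : V} {p : T.Walk u v} (hp : p.IsPath) :
    p.length = T.dist u v := by
  obtain ⟨q, hq, hlen⟩ := hT.connected.exists_path_of_dist u v
  rw [hT.isPath_unique hp hq, hlen]

theorem dist_eq_add_of_mem_support {u v m : V} {p : T.Walk u v} (hp : p.IsPath)
    (hm : m ∈ p.support) : T.dist u v = T.dist u m + T.dist m v := by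
  classical
  have h := congrArg Walk.length (p.take_spec hm)
  rwa [Walk.length_append, hT.length_eq_dist_of_isPath hp,
    hT.length_eq_dist_of_isPath (hp.takeUntil hm),
    hT.length_eq_dist_of_isPath (hp.dropUntil hm), eq_comm] at h

theorem mem_support_of_dist_add_dist_eq {u v m : V} {p : T.Walk u v} (hp : p.IsPath)
    (h : T.dist u m + T.dist m v = T.dist u v) : m ∈ p.support := by
  obtain ⟨q₁, -, hq₁⟩ := hT.connected.exists_path_of_dist u m
  obtain ⟨q₂, -, hq₂⟩ := hT.connected.exists_path_of_dist m v
  have hq : (q₁.append q₂).IsPath :=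
    Walk.isPath_of_length_eq_dist _ (by rw [Walk.length_append, hq₁, hq₂, h])
  rw [hT.isPath_unique hp hq, Walk.mem_support_append_iff]
  exact Or.inl q₁.end_mem_support

theorem eq_of_adj_of_dist_eq_add_one {x w z₁ z₂ : V} (h₁ : T.Adj w z₁) (h₂ : T.Adj w z₂)
    (hd₁ : T.dist x w = T.dist x z₁ + 1) (hd₂ : T.dist x w = T.dist x z₂ + 1) : z₁ = z₂ := by
  obtain ⟨p, hp, -⟩ := hT.connected.exists_path_of_dist x w
  have hmem {z : V} (h : T.Adj w z) (hd : T.dist x w = T.dist x z + 1) : z ∈ p.support :=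
    hT.mem_support_of_dist_add_dist_eq hp
      (by rw [dist_comm (u := z), dist_eq_one_iff_adj.mpr h, hd])
  rw [hT.isAcyclic.eq_penultimate_of_adj_end hp h₁ (hmem h₁ hd₁),
    hT.isAcyclic.eq_penultimate_of_adj_end hp h₂ (hmem h₂ hd₂)]

theorem eq_of_mem_support_of_dist_eq {ℓ w u u' : V} {p : T.Walk ℓ w} (hp : p.IsPath)
    (hu : u ∈ p.support) (hu' : u' ∈ p.support) (h : T.dist u w = T.dist u' w) : u = u' := by
  classical
  have e₁ := hT.dist_eq_add_of_mem_support hp hu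
  have e₂ := hT.dist_eq_add_of_mem_support hp hu'
  have hmem : u' ∈ ((p.takeUntil u hu).append (p.dropUntil u hu)).support := by
    rwa [p.take_spec hu]
  rcases (Walk.mem_support_append_iff _ _).mp hmem with hm | hm
  · have := hT.dist_eq_add_of_mem_support (hp.takeUntil hu) hm
    exact ((hT.connected.dist_eq_zero_iff).mp (by omega : T.dist u' u = 0)).symm
  · have := hT.dist_eq_add_of_mem_support (hp.dropUntil hu) hm
    exact (hT.connected.dist_eq_zero_iff).mp (by omega : T.dist u u' = 0)

end IsTree

section Tree

variable {T : SimpleGraph V} {S : Set V} {b : V}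

theorem IsAttachedAt.dist_eq_add (hS : T.IsAttachedAt S b) (hT : T.IsTree) {x z : V}
    (hx : x ∈ S) (hz : z ∉ S) :
    T.dist x z = T.dist x b + T.dist b z := by
  obtain ⟨p, hp, -⟩ := hT.connected.exists_path_of_dist x z
  exact hT.dist_eq_add_of_mem_support hp (hS.mem_support hx hz p)

theorem IsAttachedAt.dist_induce (hS : T.IsAttachedAt S b) (hT : T.IsTree) (hb : b ∈ S)
    (x y : S) : (T.induce S).dist x y = T.dist x y := by
  classical
  obtain ⟨p, hp, hlen⟩ := hT.connected.exists_path_of_dist x y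
  have hsub := hS.support_subset hb x.2 y.2 hp
  refine le_antisymm ?_ (dist_le_dist_induce ⟨p.induce S hsub⟩)
  exact (dist_le (p.induce S hsub)).trans (by rw [Walk.length_induce, hlen])

theorem IsAttachedAt.connected_induce (hS : T.IsAttachedAt S b) (hT : T.IsTree) (hb : b ∈ S) :
    (T.induce S).Connected := by
  classical
  refine (connected_iff_exists_forall_reachable _).mpr ⟨⟨b, hb⟩, fun y ↦ ?_⟩
  obtain ⟨p, hp, -⟩ := hT.connected.exists_path_of_dist b y
  exact ⟨p.induce S (hS.support_subset hb hb y.2 hp)⟩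

theorem IsAttachedAt.distToSet_induce (hS : T.IsAttachedAt S b) (hT : T.IsTree) (hb : b ∈ S)
    (x : S) (A : Set S) : distToSet (T.induce S) x A = distToSet T x (Subtype.val '' A) := by
  simp only [distToSet, Set.image_image, hS.dist_induce hT hb]

theorem IsAttachedAt.distToSet_eq_add (hS : T.IsAttachedAt S b) (hT : T.IsTree) {u : V}
    (hu : u ∉ S) {C : Set V} (hCS : C ⊆ S) (hC : C.Nonempty) :
    distToSet T u C = T.dist u b + distToSet T b C := by
  refine distToSet_eq_add_of_forall_dist_eq hC fun z hz ↦ ?_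
  have := hS.dist_eq_add hT (hCS hz) hu
  simp only [dist_comm] at *
  omega

/-- Vertices outside `S` are at distance at least `dist u b + 1` from `u ∈ S`. -/
theorem IsAttachedAt.distToSet_union_eq_left (hS : T.IsAttachedAt S b) (hT : T.IsTree)
    (hb : b ∈ S) {u s : V} (hu : u ∈ S) {A B : Set V} (hs : s ∈ A) (hsb : T.dist b s ≤ 1)
    (hB : ∀ z ∈ B, z ∉ S) : distToSet T u (A ∪ B) = distToSet T u A := by
  refine _root_.distToSet_union_eq_left ⟨s, hs⟩ fun z hz ↦ ?_
  have := hS.dist_eq_add hT hu (hB z hz)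
  have := hT.connected.pos_dist_of_ne (fun h : b = z ↦ hB z hz (h ▸ hb))
  have : T.dist u s ≤ T.dist u b + T.dist b s := hT.connected.dist_triangle
  have := distToSet_le_dist (G := T) (u := u) hs
  omega

end Tree

/-- For an edge `ab` of a tree, the component of `a` after deleting the edge. -/
def side (G : SimpleGraph V) (a b : V) : Set V := {x | G.dist x a < G.dist x b}

theorem disjoint_side (G : SimpleGraph V) (a b : V) : Disjoint (G.side a b) (G.side b a) :=
  Set.disjoint_left.mpr fun x (h₁ : G.dist x a < G.dist x b) h₂ ↦ lt_asymm h₁ h₂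

namespace IsTree

variable {T : SimpleGraph V} (hT : T.IsTree) {a b x : V}
include hT

theorem mem_side_iff (h : T.Adj a b) : x ∈ T.side a b ↔ T.dist x b = T.dist x a + 1 := by
  rcases hT.dist_eq_dist_add_one_of_adj x h with h' | h' <;> simp only [side, Set.mem_ofPred_eq] <;>
    omega

theorem notMem_side_iff (h : T.Adj a b) : x ∉ T.side a b ↔ x ∈ T.side b a := by
  rcases hT.dist_eq_dist_add_one_of_adj x h with h' | h' <;> simp only [side, Set.mem_ofPred_eq] <;>
    omega

omit hT in
theorem mem_side_self (h : T.Adj a b) : a ∈ T.side a b := by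
  simp [side, dist_eq_one_iff_adj.mpr h]

/-- The neighbour of `x` towards `a` is also its neighbour towards `b`, so no other neighbour of
`x` can be closer to `b`. -/
theorem side_isAttachedAt (h : T.Adj a b) : T.IsAttachedAt (T.side a b) a := by
  intro x hx hxa y hxy
  rw [hT.mem_side_iff h] at hx ⊢
  obtain ⟨z, hxz, hza⟩ := (hT.connected x a).exists_adj_dist_eq_add_one hxa
  have hzb : T.dist b x = T.dist b z + 1 := by
    have : T.dist z b ≤ T.dist z a + T.dist a b := hT.connected.dist_triangle
    rw [dist_eq_one_iff_adj.mpr h] at this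
    rcases hT.dist_eq_dist_add_one_of_adj b hxz with h' | h' <;>
      simp only [dist_comm] at * <;> omega
  by_cases hyz : y = z
  · subst hyz
    simp only [dist_comm] at *
    omega
  · have hby := (hT.dist_eq_dist_add_one_of_adj b hxy).resolve_left
      fun h' ↦ hyz (hT.eq_of_adj_of_dist_eq_add_one hxy hxz h' hzb)
    have hay := (hT.dist_eq_dist_add_one_of_adj a hxy).resolve_left
      fun h' ↦ hyz (hT.eq_of_adj_of_dist_eq_add_one hxy hxz h' hza)
    simp only [dist_comm] at *
    omega

theorem dist_eq_add_of_mem_side (h : T.Adj a b) {z : V} (hx : x ∈ T.side a b)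
    (hz : z ∈ T.side b a) : T.dist x z = T.dist x a + T.dist a z :=
  (hT.side_isAttachedAt h).dist_eq_add hT hx
    (Set.disjoint_right.mp (T.disjoint_side a b) hz)

theorem disjoint_side_of_adj {z₁ z₂ w : V} (h₁ : T.Adj z₁ w) (h₂ : T.Adj z₂ w) (hne : z₁ ≠ z₂) :
    Disjoint (T.side z₁ w) (T.side z₂ w) :=
  Set.disjoint_left.mpr fun _ hx₁ hx₂ ↦ hne <| hT.eq_of_adj_of_dist_eq_add_one h₁.symm h₂.symm
    ((hT.mem_side_iff h₁).mp hx₁) ((hT.mem_side_iff h₂).mp hx₂)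

theorem side_subset_side {z w : V} (h : T.Adj z w) (hz : z ∈ T.side a b) (hb : b ∈ T.side w z) :
    T.side z w ⊆ T.side a b := by
  intro x hx
  have hxb := hT.dist_eq_add_of_mem_side h hx hb
  have : T.dist x a ≤ T.dist x z + T.dist z a := hT.connected.dist_triangle
  simp only [side, Set.mem_ofPred_eq] at hz ⊢
  omega

theorem exists_degree_eq_one_mem_side [Fintype V] [DecidableRel T.Adj] (h : T.Adj a b) :
    ∃ ℓ ∈ T.side a b, T.degree ℓ = 1 := by
  classical
  obtain ⟨ℓ, hℓ, hmax⟩ := (T.side a b).toFinset.exists_max_image (T.dist · b)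
    ⟨a, Set.mem_toFinset.mpr (mem_side_self h)⟩
  rw [Set.mem_toFinset] at hℓ
  refine ⟨ℓ, hℓ, ?_⟩
  have hℓb : ℓ ≠ b := by rintro rfl; simp [side] at hℓ
  obtain ⟨y, hℓy, hy⟩ := (hT.connected ℓ b).exists_adj_dist_eq_add_one hℓb
  -- a neighbour farther from `b` would still lie in the side, contradicting maximality
  have hcloser : ∀ z, T.Adj ℓ z → T.dist b ℓ = T.dist b z + 1 := by
    intro z hz
    rcases hT.dist_eq_dist_add_one_of_adj b hz with h' | h'
    · exact h'
    · have hzs : z ∈ T.side a b := by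
        rw [hT.mem_side_iff h] at hℓ
        have : T.dist z a ≤ T.dist z ℓ + T.dist ℓ a := hT.connected.dist_triangle
        rw [dist_eq_one_iff_adj.mpr hz.symm] at this
        simp only [side, Set.mem_ofPred_eq]
        simp only [dist_comm] at *
        omega
      have := hmax z (Set.mem_toFinset.mpr hzs)
      simp only [dist_comm] at *
      omega
  rw [← card_neighborFinset_eq_degree, Finset.card_eq_one]
  exact ⟨y, Finset.eq_singleton_iff_unique_mem.mpr ⟨(mem_neighborFinset _ _ _).mpr hℓy,
    fun z hz ↦ hT.eq_of_adj_of_dist_eq_add_one ((mem_neighborFinset _ _ _).mp hz) hℓy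
      (hcloser z ((mem_neighborFinset _ _ _).mp hz)) hy⟩⟩

end IsTree

end SimpleGraph

/-! ### End-paths and end-palms -/

section EndPalm

variable {V : Type*} [Fintype V] {T : SimpleGraph V} [DecidableRel T.Adj] {u v w x z : V}

namespace IsEndPath

variable {p : T.Walk u v}

theorem isPath (hp : IsEndPath T p) : p.IsPath :=
  hp.1

theorem degree_start (hp : IsEndPath T p) : T.degree u = 1 :=
  hp.2.1

theorem three_le_degree_end (hp : IsEndPath T p) : 3 ≤ T.degree v :=
  hp.2.2.1

theorem degree_eq_two (hp : IsEndPath T p) (hx : x ∈ p.support) (hxu : x ≠ u) (hxv : x ≠ v) :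
    T.degree x = 2 :=
  hp.2.2.2 x hx hxu hxv

theorem ne (hp : IsEndPath T p) : u ≠ v := by
  rintro rfl
  have h₁ := hp.degree_start
  have h₃ := hp.three_le_degree_end
  omega

theorem degree_le_two (hp : IsEndPath T p) (hx : x ∈ p.support) (hxv : x ≠ v) :
    T.degree x ≤ 2 := by
  by_cases hxu : x = u
  · rw [hxu, hp.degree_start]; norm_num
  · exact (hp.degree_eq_two hx hxu hxv).le

theorem isAttachedAt (hp : IsEndPath T p) : T.IsAttachedAt {x | x ∈ p.support} v := by
  classical
  intro x hx hxv z hxz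
  by_contra hz
  have hne {y : V} (hy : y ∈ p.support) : y ≠ z := by rintro rfl; exact hz hy
  by_cases hxu : x = u
  · obtain ⟨s, hs, hsp⟩ := Walk.exists_adj_mem_support_of_ne hx hxv
    have := card_le_degree (G := T) (x := x) (s := {s, z}) (by simp [hs, hxz])
    rw [Finset.card_pair (hne (p.support_dropUntil_subset_support hx (List.mem_of_mem_tail hsp))),
      hxu, hp.degree_start] at this
    omega
  · obtain ⟨r, s, hrs, hr, hs, hrp, hsp⟩ := hp.isPath.exists_adj_adj_of_mem_support hx hxu hxv
    have := card_le_degree (G := T) (x := x) (s := {r, s, z}) (by simp [hr, hs, hxz])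
    rw [Finset.card_eq_three.mpr ⟨r, s, z, hrs, hne hrp, hne hsp, rfl⟩,
      hp.degree_eq_two hx hxu hxv] at this
    omega

theorem dist_eq_add (hp : IsEndPath T p) (hT : T.IsTree) (hx : x ∈ p.support)
    (hz : z ∉ p.support) : T.dist x z = T.dist x v + T.dist v z :=
  hp.isAttachedAt.dist_eq_add hT hx hz

theorem mem_endPalm (hp : IsEndPath T p) (hx : x ∈ p.support) : x ∈ endPalm T v :=
  Or.inr ⟨u, p, hp, hx⟩

end IsEndPath

theorem IsEndBranch.three_le_degree (hv : IsEndBranch T v) : 3 ≤ T.degree v := by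
  obtain ⟨_, _, _, _, _, hp, _⟩ := hv
  exact hp.three_le_degree_end

theorem mem_endPalm_self : v ∈ endPalm T v :=
  Or.inl rfl

theorem degree_le_two_of_mem_endPalm (hx : x ∈ endPalm T v) (hxv : x ≠ v) : T.degree x ≤ 2 := by
  rcases hx with hx | ⟨u, p, hp, hx⟩
  exacts [absurd hx hxv, hp.degree_le_two hx hxv]

theorem endPalm_isAttachedAt : T.IsAttachedAt (endPalm T v) v := by
  rintro x (rfl | ⟨u, p, hp, hx⟩) hxv z hz
  exacts [absurd rfl hxv, hp.mem_endPalm (hp.isAttachedAt x hx hxv z hz)]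

theorem IsEndBranch.notMem_endPalm (hv : IsEndBranch T v) (hvw : v ≠ w) : v ∉ endPalm T w :=
  fun h ↦ by
    have := degree_le_two_of_mem_endPalm h hvw
    have := hv.three_le_degree
    omega

theorem IsEndPath.notMem_support_of_isEndBranch {p : T.Walk u w} (hp : IsEndPath T p)
    (hx : IsEndBranch T x) (hxw : x ≠ w) : x ∉ p.support :=
  fun h ↦ hx.notMem_endPalm hxw (hp.mem_endPalm h)

theorem IsEndBranch.eq_of_mem_endPalm (hT : T.IsTree) (hv : IsEndBranch T v)
    (hw : IsEndBranch T w) (hxv : x ∈ endPalm T v) (hxw : x ∈ endPalm T w) : v = w := by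
  by_contra hne
  have e₁ := endPalm_isAttachedAt.dist_eq_add hT hxv (hw.notMem_endPalm (Ne.symm hne))
  have e₂ := endPalm_isAttachedAt.dist_eq_add hT hxw (hv.notMem_endPalm hne)
  have := hT.connected.pos_dist_of_ne hne
  rw [dist_comm (u := w)] at e₂
  omega

end EndPalm

namespace SimpleGraph.IsTree

variable {V : Type*} [Fintype V] {T : SimpleGraph V} [DecidableRel T.Adj] (hT : T.IsTree)
include hT

theorem exists_isEndPath_of_degree_le_two {z w : V} (h : T.Adj z w)
    (hdeg : ∀ x ∈ T.side z w, T.degree x ≤ 2) (hw : 3 ≤ T.degree w) :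
    ∃ ℓ ∈ T.side z w, ∃ P : T.Walk ℓ w, IsEndPath T P := by
  classical
  obtain ⟨ℓ, hℓ, hℓ₁⟩ := hT.exists_degree_eq_one_mem_side h
  obtain ⟨P, hP, -⟩ := hT.connected.exists_path_of_dist ℓ w
  have hside : ∀ x ∈ P.support, x ≠ w → x ∈ T.side z w := by
    intro x hx hxw
    by_contra hxs
    rw [hT.notMem_side_iff h] at hxs
    have := (hT.side_isAttachedAt h.symm).mem_support hxs
      (Set.disjoint_right.mp (T.disjoint_side w z) hℓ) (P.takeUntil x hx).reverse
    rw [Walk.support_reverse, List.mem_reverse] at this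
    exact Walk.endpoint_notMem_support_takeUntil hP hx (Ne.symm hxw) this
  refine ⟨ℓ, hℓ, P, hP, hℓ₁, hw, fun x hx hxℓ hxw ↦ ?_⟩
  have := hdeg x (hside x hx hxw)
  have := hP.two_le_degree hx hxℓ hxw
  omega

theorem isEndBranch_of_forall_side_degree_le_two {w y : V} (hw : 3 ≤ T.degree w)
    (hwy : T.Adj w y) (hchain : ∀ z, T.Adj w z → z ≠ y → ∀ x ∈ T.side z w, T.degree x ≤ 2) :
    IsEndBranch T w := by
  classical
  obtain ⟨z₁, hz₁, z₂, hz₂, hne⟩ := Finset.one_lt_card.mp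
    (show 1 < ((T.neighborFinset w).erase y).card by
      rw [Finset.card_erase_of_mem ((mem_neighborFinset _ _ _).mpr hwy),
        card_neighborFinset_eq_degree]
      omega)
  simp only [Finset.mem_erase, mem_neighborFinset] at hz₁ hz₂
  obtain ⟨ℓ₁, hℓ₁, P₁, hP₁⟩ :=
    hT.exists_isEndPath_of_degree_le_two hz₁.2.symm (hchain z₁ hz₁.2 hz₁.1) hw
  obtain ⟨ℓ₂, hℓ₂, P₂, hP₂⟩ :=
    hT.exists_isEndPath_of_degree_le_two hz₂.2.symm (hchain z₂ hz₂.2 hz₂.1) hw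
  refine ⟨ℓ₁, ℓ₂, P₁, P₂, fun h ↦ ?_, hP₁, hP₂⟩
  exact Set.disjoint_left.mp (hT.disjoint_side_of_adj hz₁.2.symm hz₂.2.symm hne) hℓ₁ (h ▸ hℓ₂)

theorem degree_le_two_of_mem_side {a b : V} (h : T.Adj a b)
    (hnb : ∀ x ∈ T.side a b, ¬IsEndBranch T x) : ∀ x ∈ T.side a b, T.degree x ≤ 2 := by
  classical
  by_contra! ⟨x₀, hx₀, hx₀d⟩
  -- the branch of the side farthest from `b` would be an end-branch
  obtain ⟨w, hw, hmax⟩ :=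
    ((T.side a b).toFinset.filter (3 ≤ T.degree ·)).exists_max_image (T.dist b ·)
      ⟨x₀, by simp only [Finset.mem_filter, Set.mem_toFinset]; exact ⟨hx₀, hx₀d⟩⟩
  simp only [Finset.mem_filter, Set.mem_toFinset] at hw hmax
  obtain ⟨hws, hwd⟩ := hw
  have hwb : w ≠ b := by rintro rfl; simp [side] at hws
  obtain ⟨y, hwy, hy⟩ := (hT.connected w b).exists_adj_dist_eq_add_one hwb
  have hchain : ∀ z, T.Adj w z → z ≠ y → ∀ x ∈ T.side z w, T.degree x ≤ 2 := by
    intro z hwz hzy x hx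
    have hbz : T.dist b z = T.dist b w + 1 := (hT.dist_eq_dist_add_one_of_adj b hwz).resolve_left
      fun h' ↦ hzy (hT.eq_of_adj_of_dist_eq_add_one hwz hwy h' hy)
    have hzs : z ∈ T.side a b := by
      have : T.dist z a ≤ T.dist z w + T.dist w a := hT.connected.dist_triangle
      rw [dist_eq_one_iff_adj.mpr hwz.symm] at this
      simp only [side, Set.mem_ofPred_eq] at hws ⊢
      simp only [dist_comm] at *
      omega
    have hbs : b ∈ T.side w z := by
      simp only [side, Set.mem_ofPred_eq]
      omega
    have hxb := hT.dist_eq_add_of_mem_side hwz.symm hx hbs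
    by_contra! hxd
    have := hmax x ⟨hT.side_subset_side hwz.symm hzs hbs hx, hxd⟩
    simp only [dist_comm] at *
    omega
  exact hnb w hws (hT.isEndBranch_of_forall_side_degree_le_two hwd hwy hchain)

theorem exists_isEndPath_of_forall_not_isEndBranch {a b : V} (h : T.Adj a b)
    (hnb : ∀ x ∈ T.side a b, ¬IsEndBranch T x) (hex : ∃ v, IsEndBranch T v) :
    ∃ ℓ w, ∃ P : T.Walk ℓ w, IsEndPath T P ∧ a ∈ P.support ∧ w ∉ T.side a b := by
  classical
  have hdeg := hT.degree_le_two_of_mem_side h hnb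
  obtain ⟨ℓ, hℓ, hℓ₁⟩ := hT.exists_degree_eq_one_mem_side h
  obtain ⟨v, hv⟩ := hex
  obtain ⟨P₀, hP₀, -⟩ := hT.connected.exists_path_of_dist ℓ v
  -- `w` is the first branch on the way from `ℓ` to `v`
  obtain ⟨w, hw, hmin⟩ :=
    (P₀.support.toFinset.filter (3 ≤ T.degree ·)).exists_min_image (T.dist ℓ ·)
      ⟨v, by simp [hv.three_le_degree]⟩
  simp only [Finset.mem_filter, List.mem_toFinset] at hw hmin
  obtain ⟨hw, hwd⟩ := hw
  have hws : w ∉ T.side a b := fun hws ↦ by have := hdeg w hws; omega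
  have hP := hP₀.takeUntil hw
  refine ⟨ℓ, w, _, ⟨hP, hℓ₁, hwd, fun x hx hxℓ hxw ↦ ?_⟩,
    (hT.side_isAttachedAt h).mem_support hℓ hws _, hws⟩
  have := hP.two_le_degree hx hxℓ hxw
  by_contra hx2
  have := hmin x ⟨P₀.support_takeUntil_subset_support hw hx, by omega⟩
  have := hT.dist_eq_add_of_mem_support hP hx
  have := hT.connected.pos_dist_of_ne hxw
  omega

theorem exists_adj_adj_notMem_support {ℓ w : V} {p : T.Walk ℓ w} (hp : p.IsPath)
    (hw : 3 ≤ T.degree w) :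
    ∃ z₁ z₂, z₁ ≠ z₂ ∧ T.Adj w z₁ ∧ T.Adj w z₂ ∧ z₁ ∉ p.support ∧ z₂ ∉ p.support := by
  classical
  obtain ⟨z₁, hz₁, z₂, hz₂, hne⟩ := Finset.one_lt_card.mp
    (show 1 < ((T.neighborFinset w).erase p.penultimate).card by
      have := Finset.pred_card_le_card_erase (s := T.neighborFinset w) (a := p.penultimate)
      rw [card_neighborFinset_eq_degree] at this
      omega)
  simp only [Finset.mem_erase, mem_neighborFinset] at hz₁ hz₂
  exact ⟨z₁, z₂, hne, hz₁.2, hz₂.2,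
    fun h ↦ hz₁.1 (hT.isAcyclic.eq_penultimate_of_adj_end hp hz₁.2 h),
    fun h ↦ hz₂.1 (hT.isAcyclic.eq_penultimate_of_adj_end hp hz₂.2 h)⟩

theorem exists_isEndBranch_mem_side {ℓ w z : V} {p : T.Walk ℓ w} (hp : IsEndPath T p)
    (hw : ¬IsEndBranch T w) (hz : T.Adj z w) (hzp : z ∉ p.support) :
    ∃ x ∈ T.side z w, IsEndBranch T x := by
  by_contra! hnb
  obtain ⟨ℓ', hℓ', p', hp'⟩ :=
    hT.exists_isEndPath_of_degree_le_two hz (hT.degree_le_two_of_mem_side hz hnb)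
    hp.three_le_degree_end
  refine hw ⟨ℓ, ℓ', p, p', ?_, hp, hp'⟩
  rintro rfl
  have hwz : w ∉ T.side z w := Set.disjoint_right.mp (T.disjoint_side z w) (mem_side_self hz.symm)
  exact hzp (hT.isPath_unique hp'.isPath hp.isPath ▸
    (hT.side_isAttachedAt hz).mem_support hℓ' hwz p')

theorem exists_isEndBranch_dist_eq_add {ℓ w : V} {p : T.Walk ℓ w} (hp : IsEndPath T p)
    (hw : ¬IsEndBranch T w) (τ : V) :
    ∃ x, IsEndBranch T x ∧ T.dist τ x = T.dist τ w + T.dist w x := by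
  obtain ⟨z₁, z₂, hne, h₁, h₂, hz₁, hz₂⟩ := hT.exists_adj_adj_notMem_support hp.isPath
    hp.three_le_degree_end
  obtain ⟨z, hz, hzp, hτ⟩ : ∃ z, T.Adj w z ∧ z ∉ p.support ∧ τ ∉ T.side z w := by
    by_cases hτ : τ ∈ T.side z₁ w
    · exact ⟨z₂, h₂, hz₂,
        Set.disjoint_left.mp (hT.disjoint_side_of_adj h₁.symm h₂.symm hne) hτ⟩
    · exact ⟨z₁, h₁, hz₁, hτ⟩
  obtain ⟨x, hx, hxe⟩ := hT.exists_isEndBranch_mem_side hp hw hz.symm hzp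
  exact ⟨x, hxe, hT.dist_eq_add_of_mem_side hz ((hT.notMem_side_iff hz.symm).mp hτ) hx⟩

theorem exists_isEndBranch_dist_add_two_le {ℓ w u : V} {p : T.Walk ℓ w} (hp : IsEndPath T p)
    (hw : ¬IsEndBranch T w) (hu : u ∉ p.support) :
    ∃ x, IsEndBranch T x ∧ T.dist u x + 2 ≤ T.dist u w + T.dist w x := by
  have hwu : w ≠ u := fun h ↦ hu (h ▸ p.end_mem_support)
  obtain ⟨z, hwz, hzd⟩ := (hT.connected w u).exists_adj_dist_eq_add_one hwu
  have hzp : z ∉ p.support := fun hzp ↦ by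
    have := hp.dist_eq_add hT hzp hu
    rw [dist_eq_one_iff_adj.mpr hwz.symm] at this
    simp only [dist_comm] at *
    omega
  obtain ⟨x, hx, hxe⟩ := hT.exists_isEndBranch_mem_side hp hw hwz.symm hzp
  have h₁ := (hT.mem_side_iff hwz.symm).mp hx
  have h₂ : T.dist u x ≤ T.dist u z + T.dist z x := hT.connected.dist_triangle
  refine ⟨x, hxe, ?_⟩
  simp only [dist_comm] at *
  omega

theorem exists_isEndPath_of_forall_notMem_endPalm {u y : V}
    (hu : ∀ v, IsEndBranch T v → u ∉ endPalm T v) (huy : T.Adj u y)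
    (hnb : ∀ x ∈ T.side u y, ¬IsEndBranch T x) (hex : ∃ v, IsEndBranch T v) :
    ∃ ℓ w, ∃ p : T.Walk ℓ w, IsEndPath T p ∧ u ∈ p.support ∧ u ≠ w ∧ ¬IsEndBranch T w := by
  obtain ⟨ℓ, w, p, hp, hup, hw⟩ := hT.exists_isEndPath_of_forall_not_isEndBranch huy hnb hex
  exact ⟨ℓ, w, p, hp, hup, by rintro rfl; exact hw (mem_side_self huy),
    fun hwe ↦ hu w hwe (hp.mem_endPalm hup)⟩

theorem eq_of_forall_isEndBranch_dist_eq {u u' : V}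
    (hu' : ∀ v, IsEndBranch T v → u' ∉ endPalm T v) (hex : ∃ v, IsEndBranch T v)
    (h : ∀ x, IsEndBranch T x → T.dist u x = T.dist u' x) : u = u' := by
  by_contra hne
  obtain ⟨y, hy, hyd⟩ := (hT.connected u' u).exists_adj_dist_eq_add_one (Ne.symm hne)
  -- an end-branch behind `u'`, as seen from `u`, would be closer to `u'` than to `u`
  have hnb : ∀ x ∈ T.side u' y, ¬IsEndBranch T x := by
    intro x hx hxe
    have huy : u ∈ T.side y u' := by
      simp only [side, Set.mem_ofPred_eq]
      omega
    have := hT.dist_eq_add_of_mem_side hy hx huy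
    have := h x hxe
    have := hT.connected.pos_dist_of_ne hne
    simp only [dist_comm] at *
    omega
  obtain ⟨ℓ, w, p, hp, hu'p, hu'w, hw⟩ :=
    hT.exists_isEndPath_of_forall_notMem_endPalm hu' hy hnb hex
  have hxp {x : V} (hx : IsEndBranch T x) : x ∉ p.support :=
    hp.notMem_support_of_isEndBranch hx fun h ↦ hw (h ▸ hx)
  obtain ⟨x, hxe, hxd⟩ := hT.exists_isEndBranch_dist_eq_add hp hw u
  have huw : T.dist u w = T.dist u' w := by
    have := hp.dist_eq_add hT hu'p (hxp hxe)
    have := h x hxe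
    omega
  by_cases hup : u ∈ p.support
  · exact hne (hT.eq_of_mem_support_of_dist_eq hp.isPath hup hu'p huw)
  obtain ⟨x', hx'e, hx'⟩ := hT.exists_isEndBranch_dist_add_two_le hp hw hup
  have := hp.dist_eq_add hT hu'p (hxp hx'e)
  have := h x' hx'e
  omega

theorem exists_isEndBranch_ne {u v : V} (hu : ∀ v, IsEndBranch T v → u ∉ endPalm T v)
    (hv : IsEndBranch T v) : ∃ x, IsEndBranch T x ∧ x ≠ v := by
  have huv : u ≠ v := fun h ↦ hu v hv (h ▸ mem_endPalm_self)
  obtain ⟨y, hy, hyd⟩ := (hT.connected u v).exists_adj_dist_eq_add_one huv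
  by_cases hnb : ∀ x ∈ T.side u y, ¬IsEndBranch T x
  · obtain ⟨ℓ, w, p, hp, -, -, hw⟩ :=
      hT.exists_isEndPath_of_forall_notMem_endPalm hu hy hnb ⟨v, hv⟩
    obtain ⟨x, hxe, hxd⟩ := hT.exists_isEndBranch_dist_eq_add hp hw v
    refine ⟨x, hxe, fun hxv ↦ hw ?_⟩
    subst hxv
    rw [dist_self] at hxd
    rwa [hT.connected.dist_eq_zero_iff.mp (by omega : T.dist w x = 0)]
  · push Not at hnb
    obtain ⟨x, hx, hxe⟩ := hnb
    refine ⟨x, hxe, ?_⟩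
    rintro rfl
    simp only [side, Set.mem_ofPred_eq] at hx
    simp only [dist_comm] at *
    omega

end SimpleGraph.IsTree

/-! ### Locating colorings -/

section LocatingColoring

variable {W : Type*} {G : SimpleGraph W}

theorem locatingChromaticNumber_le_card {α : Type*} [Fintype α] (c : W → α)
    (hproper : ∀ u v, G.Adj u v → c u ≠ c v)
    (hres : ∀ u v, u ≠ v → ∃ i, distToSet G u (c ⁻¹' {i}) ≠ distToSet G v (c ⁻¹' {i})) :
    locatingChromaticNumber G ≤ Fintype.card α := by
  classical
  let e := Fintype.equivFin α
  refine Nat.sInf_le ⟨e ∘ c, fun u v h ↦ e.injective.ne (hproper u v h), fun u v huv ↦ ?_⟩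
  obtain ⟨i, hi⟩ := hres u v huv
  refine ⟨e i, ?_⟩
  have : (e ∘ c) ⁻¹' {e i} = c ⁻¹' {i} := by ext; simp
  rwa [this]

theorem exists_isLocatingColoring_of_connected [Fintype W] (hG : G.Connected) :
    ∃ c : W → Fin (locatingChromaticNumber G), IsLocatingColoring G c := by
  classical
  let e := Fintype.equivFin W
  refine Nat.sInf_mem (s := {k | ∃ c : W → Fin k, IsLocatingColoring G c})
    ⟨Fintype.card W, e, fun u v h ↦ e.injective.ne h.ne, fun u v huv ↦ ⟨e u, ?_⟩⟩
  have : e ⁻¹' {e u} = {u} := by ext; simp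
  rw [this, distToSet_singleton, distToSet_singleton, dist_self]
  exact (hG.pos_dist_of_ne (Ne.symm huv)).ne

/-- If only two colors were used, every vertex would see its own color at distance `0`, the
other one at distance `1`, so two vertices of the same color would not be resolved. -/
theorem IsLocatingColoring.exists_ne_ne {k : ℕ} {c : W → Fin k} (hc : IsLocatingColoring G c)
    (hG : G.Connected) {x y z : W} (hxy : x ≠ y) (hxz : x ≠ z) (hyz : y ≠ z) (a b : Fin k) :
    ∃ w, c w ≠ a ∧ c w ≠ b := by
  by_contra! hab
  have hcol : ∀ w, c w = a ∨ c w = b := fun w ↦ or_iff_not_imp_left.mpr (hab w)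
  obtain ⟨u, u', huu, hcu⟩ : ∃ u u', u ≠ u' ∧ c u = c u' := by
    rcases hcol x with hx | hx <;> rcases hcol y with hy | hy <;> rcases hcol z with hz | hz <;>
      first
        | exact ⟨x, y, hxy, hx.trans hy.symm⟩
        | exact ⟨x, z, hxz, hx.trans hz.symm⟩
        | exact ⟨y, z, hyz, hy.trans hz.symm⟩
  have hnbr (w : W) : ∃ t, G.Adj w t := by
    obtain ⟨w', hw'⟩ : ∃ w', w ≠ w' := by
      by_cases h : w = x
      exacts [⟨y, h ▸ hxy⟩, ⟨x, h⟩]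
    obtain ⟨t, ht, -⟩ := (hG w w').exists_adj_dist_eq_add_one hw'
    exact ⟨t, ht⟩
  have hprofile {w t : W} (hwt : G.Adj w t) (i : Fin k) :
      distToSet G w (c ⁻¹' {i}) = if i = c w then 0 else if i = c t then 1 else 0 := by
    have hwt' := hc.1 w t hwt
    split_ifs with h₁ h₂
    · exact distToSet_eq_zero_of_mem (by simp [h₁])
    · exact distToSet_eq_one_of_adj hG (by simpa using Ne.symm h₁) (by simp [h₂]) hwt
    · have : c ⁻¹' {i} = ∅ := by
        ext v
        have := hcol v
        have := hcol w
        have := hcol t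
        simp only [Set.mem_preimage, Set.mem_singleton_iff, Set.mem_empty_iff_false, iff_false]
        grind
      rw [this, distToSet_empty]
  obtain ⟨t, ht⟩ := hnbr u
  obtain ⟨t', ht'⟩ := hnbr u'
  have hct : c t = c t' := by
    have := hc.1 u t ht
    have := hc.1 u' t' ht'
    have := hcol t
    have := hcol t'
    have := hcol u
    grind
  obtain ⟨i, hi⟩ := hc.2 u u' huu
  rw [hprofile ht, hprofile ht', hcu, hct] at hi
  exact hi rfl

end LocatingColoring

/-! ### The coloring of the tree -/

section Construction

variable {V : Type*} [Fintype V] {T : SimpleGraph V} [DecidableRel T.Adj]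

abbrev EndBranch (T : SimpleGraph V) [DecidableRel T.Adj] : Type _ := {v // IsEndBranch T v}

noncomputable instance : Fintype (EndBranch T) := Fintype.ofFinite _

def endPalmBase (T : SimpleGraph V) [DecidableRel T.Adj] (v : V) : endPalm T v :=
  ⟨v, mem_endPalm_self⟩

variable (T) in
structure PalmColoring (v : V) where
  color : endPalm T v → Fin (locatingChromaticNumber (T.induce (endPalm T v)))
  isLocating : IsLocatingColoring (T.induce (endPalm T v)) color
  nbr : endPalm T v
  adj_nbr : T.Adj v nbr
  third : endPalm T v
  color_third_ne_base : color third ≠ color (endPalmBase T v)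
  color_third_ne_nbr : color third ≠ color nbr

theorem PalmColoring.nonempty (hT : T.IsTree) {v : V} (hv : IsEndBranch T v) :
    Nonempty (PalmColoring T v) := by
  classical
  have hconn := endPalm_isAttachedAt.connected_induce hT (mem_endPalm_self (v := v))
  obtain ⟨c, hc⟩ := exists_isLocatingColoring_of_connected hconn
  obtain ⟨u₁, u₂, p₁, p₂, hu, hp₁, hp₂⟩ := hv
  have hnil : ¬p₁.Nil := Walk.not_nil_of_ne hp₁.ne
  let n : endPalm T v := ⟨p₁.penultimate, hp₁.mem_endPalm (Walk.getVert_mem_support _ _)⟩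
  obtain ⟨t, ht₁, ht₂⟩ := hc.exists_ne_ne hconn
    (x := ⟨u₁, hp₁.mem_endPalm p₁.start_mem_support⟩)
    (y := ⟨u₂, hp₂.mem_endPalm p₂.start_mem_support⟩) (z := endPalmBase T v)
    (Subtype.coe_ne_coe.mp hu) (Subtype.coe_ne_coe.mp hp₁.ne) (Subtype.coe_ne_coe.mp hp₂.ne)
    (c (endPalmBase T v)) (c n)
  exact ⟨⟨c, hc, n, (Walk.adj_penultimate hnil).symm, t, ht₁, ht₂⟩⟩

variable (κ : T.Coloring (Fin 2)) (D : ∀ i : EndBranch T, PalmColoring T i)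

abbrev PalmColoring.PrivateColor {v : V} (P : PalmColoring T v) : Type :=
  {m // m ≠ P.color (endPalmBase T v) ∧ m ≠ P.color P.nbr}

abbrev Palette : Type _ := Fin 2 ⊕ Σ i : EndBranch T, (D i).PrivateColor

noncomputable def paletteColor (i : EndBranch T)
    (m : Fin (locatingChromaticNumber (T.induce (endPalm T i)))) : Palette D :=
  if h₁ : m = (D i).color (endPalmBase T i) then .inl (κ i)
  else if h₂ : m = (D i).color (D i).nbr then .inl (κ (D i).nbr)
  else .inr ⟨i, m, h₁, h₂⟩

open Classical in
noncomputable def treeColoring (x : V) : Palette D :=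
  if h : ∃ i : EndBranch T, x ∈ endPalm T i then
    paletteColor κ D h.choose ((D h.choose).color ⟨x, h.choose_spec⟩)
  else .inl (κ x)

def privateColor (i : EndBranch T) : Palette D :=
  .inr ⟨i, (D i).color (D i).third, (D i).color_third_ne_base, (D i).color_third_ne_nbr⟩

theorem paletteColor_injective (i : EndBranch T) : Function.Injective (paletteColor κ D i) := by
  have hκ := κ.valid (D i).adj_nbr
  intro m m' h
  unfold paletteColor at h
  split_ifs at h <;> simp_all

theorem paletteColor_base (i : EndBranch T) :
    paletteColor κ D i ((D i).color (endPalmBase T i)) = .inl (κ i) :=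
  dif_pos rfl

variable {κ D} (hT : T.IsTree)
include hT

theorem treeColoring_of_mem {i : EndBranch T} {x : V} (hx : x ∈ endPalm T i) :
    treeColoring κ D x = paletteColor κ D i ((D i).color ⟨x, hx⟩) := by
  have h : ∃ j : EndBranch T, x ∈ endPalm T j := ⟨i, hx⟩
  obtain rfl : h.choose = i := Subtype.ext (h.choose.2.eq_of_mem_endPalm hT i.2 h.choose_spec hx)
  rw [treeColoring, dif_pos h]

omit hT in
theorem treeColoring_of_forall_notMem {x : V} (hx : ∀ i : EndBranch T, x ∉ endPalm T i) :
    treeColoring κ D x = .inl (κ x) :=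
  dif_neg (not_exists.mpr hx)

theorem treeColoring_eq_inl {x : V} (hx : ∀ i : EndBranch T, x ∈ endPalm T i → x = i) :
    treeColoring κ D x = .inl (κ x) := by
  by_cases h : ∃ i : EndBranch T, x ∈ endPalm T i
  · obtain ⟨i, hi⟩ := h
    obtain rfl := hx i hi
    rw [treeColoring_of_mem hT hi]
    exact paletteColor_base κ D i
  · exact treeColoring_of_forall_notMem (not_exists.mp h)

theorem treeColoring_ne_of_adj {x y : V} (hxy : T.Adj x y) :
    treeColoring κ D x ≠ treeColoring κ D y := by
  by_cases h : ∃ i : EndBranch T, x ∈ endPalm T i ∧ y ∈ endPalm T i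
  · obtain ⟨i, hx, hy⟩ := h
    rw [treeColoring_of_mem hT hx, treeColoring_of_mem hT hy]
    exact (paletteColor_injective κ D i).ne ((D i).isLocating.1 _ _ (induce_adj.mpr hxy))
  push Not at h
  have hbase {x y : V} (hxy : T.Adj x y) (h : ∀ i : EndBranch T, x ∈ endPalm T i → y ∉ endPalm T i)
      (i : EndBranch T) (hx : x ∈ endPalm T i) : x = i := by
    by_contra hne
    exact h i hx (endPalm_isAttachedAt x hx hne y hxy)
  rw [treeColoring_eq_inl hT (hbase hxy h),
    treeColoring_eq_inl hT (hbase hxy.symm fun i hy hx ↦ h i hx hy)]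
  exact fun h' ↦ κ.valid hxy (Sum.inl_injective h')

end Construction

section Resolving

variable {V : Type*} [Fintype V] {T : SimpleGraph V} [DecidableRel T.Adj]
  {κ : T.Coloring (Fin 2)} {D : ∀ i : EndBranch T, PalmColoring T i} (hT : T.IsTree)
include hT

theorem treeColoring_preimage_inter_endPalm (i : EndBranch T)
    (m : Fin (locatingChromaticNumber (T.induce (endPalm T i)))) :
    treeColoring κ D ⁻¹' {paletteColor κ D i m} ∩ endPalm T i =
      Subtype.val '' ((D i).color ⁻¹' {m}) := by
  ext x
  constructor
  · rintro ⟨hx, hxi⟩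
    rw [Set.mem_preimage, treeColoring_of_mem hT hxi, Set.mem_singleton_iff] at hx
    exact ⟨⟨x, hxi⟩, paletteColor_injective κ D i hx, rfl⟩
  · rintro ⟨⟨x, hxi⟩, hxm, rfl⟩
    refine ⟨?_, hxi⟩
    rw [Set.mem_preimage, treeColoring_of_mem hT hxi, Set.mem_singleton_iff]
    rw [Set.mem_preimage, Set.mem_singleton_iff] at hxm
    rw [hxm]

theorem treeColoring_preimage_inr {i : EndBranch T} (m : (D i).PrivateColor) :
    treeColoring κ D ⁻¹' {.inr ⟨i, m⟩} = Subtype.val '' ((D i).color ⁻¹' {m.1}) := by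
  have hm : paletteColor κ D i m.1 = .inr ⟨i, m⟩ := by
    rw [paletteColor, dif_neg m.2.1, dif_neg m.2.2]
  rw [← treeColoring_preimage_inter_endPalm hT i, hm, eq_comm, Set.inter_eq_left]
  intro x hx
  by_contra hxi
  by_cases h : ∃ j : EndBranch T, x ∈ endPalm T j
  · obtain ⟨j, hj⟩ := h
    rw [Set.mem_preimage, treeColoring_of_mem hT hj, Set.mem_singleton_iff, paletteColor] at hx
    split_ifs at hx
    obtain rfl : j = i := congrArg Sigma.fst (Sum.inr_injective hx)
    exact hxi hj
  · rw [Set.mem_preimage, treeColoring_of_forall_notMem (not_exists.mp h)] at hx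
    simp at hx

theorem distToSet_treeColoring_paletteColor {i : EndBranch T} {u : V} (hu : u ∈ endPalm T i)
    (m : Fin (locatingChromaticNumber (T.induce (endPalm T i)))) :
    distToSet T u (treeColoring κ D ⁻¹' {paletteColor κ D i m}) =
      distToSet (T.induce (endPalm T i)) ⟨u, hu⟩ ((D i).color ⁻¹' {m}) := by
  rw [endPalm_isAttachedAt.distToSet_induce hT mem_endPalm_self,
    ← treeColoring_preimage_inter_endPalm hT i m]
  -- either the class contains `i` or its neighbour `nbr`, or its color is private to the palm
  by_cases h : ∃ s : endPalm T i, (D i).color s = m ∧ T.dist i s ≤ 1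
  · obtain ⟨s, hs, hsi⟩ := h
    conv_lhs => rw [← Set.inter_union_sdiff (treeColoring κ D ⁻¹' _) (endPalm T i)]
    refine endPalm_isAttachedAt.distToSet_union_eq_left hT mem_endPalm_self hu ?_ hsi
      fun z hz ↦ hz.2
    rw [treeColoring_preimage_inter_endPalm hT i m]
    exact ⟨s, hs, rfl⟩
  · push Not at h
    have h₁ : m ≠ (D i).color (endPalmBase T i) := fun h₁ ↦ by
      simpa [endPalmBase] using h (endPalmBase T i) h₁.symm
    have h₂ : m ≠ (D i).color (D i).nbr := fun h₂ ↦ by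
      simpa [dist_eq_one_iff_adj.mpr (D i).adj_nbr] using h (D i).nbr h₂.symm
    rw [treeColoring_preimage_inter_endPalm hT i m, show paletteColor κ D i m = .inr ⟨i, m, h₁, h₂⟩
      by rw [paletteColor, dif_neg h₁, dif_neg h₂], treeColoring_preimage_inr hT]

theorem distToSet_privateColor_of_notMem {i : EndBranch T} {u : V} (hu : u ∉ endPalm T i) :
    distToSet T u (treeColoring κ D ⁻¹' {privateColor D i}) =
      T.dist u i + distToSet T i (treeColoring κ D ⁻¹' {privateColor D i}) := by
  rw [privateColor, treeColoring_preimage_inr hT]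
  exact endPalm_isAttachedAt.distToSet_eq_add hT hu (Set.image_subset_iff.mpr fun x _ ↦ x.2)
    ⟨_, (D i).third, rfl, rfl⟩

theorem distToSet_privateColor_le (i : EndBranch T) (u : V) :
    distToSet T u (treeColoring κ D ⁻¹' {privateColor D i}) ≤
      T.dist u i + distToSet T i (treeColoring κ D ⁻¹' {privateColor D i}) := by
  rw [privateColor, treeColoring_preimage_inr hT]
  refine distToSet_le_dist_add hT.connected ?_ u i
  exact ⟨_, (D i).third, rfl, rfl⟩

variable {u u' : V}
  (h : ∀ γ, distToSet T u (treeColoring κ D ⁻¹' {γ}) = distToSet T u' (treeColoring κ D ⁻¹' {γ}))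
include h

theorem eq_of_mem_endPalm_of_forall_distToSet_eq {i j : EndBranch T} (hu : u ∈ endPalm T i)
    (hu' : u' ∈ endPalm T j) : u = u' := by
  by_cases hij : i = j
  · subst hij
    by_contra hne
    obtain ⟨m, hm⟩ := (D i).isLocating.2 ⟨u, hu⟩ ⟨u', hu'⟩ fun h ↦ hne (congrArg Subtype.val h)
    rw [← distToSet_treeColoring_paletteColor hT hu, ← distToSet_treeColoring_paletteColor hT hu'
      (κ := κ)] at hm
    exact hm (h _)
  have hij' : (i : V) ≠ j := fun h ↦ hij (Subtype.ext h)
  have hui : u ∉ endPalm T j := fun h ↦ hij (Subtype.ext (i.2.eq_of_mem_endPalm hT j.2 hu h))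
  have hu'j : u' ∉ endPalm T i := fun h ↦ hij (Subtype.ext (i.2.eq_of_mem_endPalm hT j.2 h hu'))
  have h₁ := h (privateColor D i)
  have h₂ := h (privateColor D j)
  rw [distToSet_privateColor_of_notMem hT hu'j] at h₁
  rw [distToSet_privateColor_of_notMem hT hui] at h₂
  have := distToSet_privateColor_le hT (κ := κ) (D := D) i u
  have := distToSet_privateColor_le hT (κ := κ) (D := D) j u'
  have e₁ := endPalm_isAttachedAt.dist_eq_add hT hu (j.2.notMem_endPalm hij'.symm)
  have e₂ := endPalm_isAttachedAt.dist_eq_add hT hu' (i.2.notMem_endPalm hij')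
  have := hT.connected.pos_dist_of_ne hij'
  rw [dist_comm (u := (j : V))] at e₂
  omega

theorem dist_eq_of_forall_distToSet_eq (hu' : ∀ v, IsEndBranch T v → u' ∉ endPalm T v)
    {x : V} (hx : IsEndBranch T x) : T.dist u x = T.dist u' x := by
  have hout {j : V} (hj : IsEndBranch T j) (huj : u ∉ endPalm T j) : T.dist u j = T.dist u' j := by
    have := h (privateColor D ⟨j, hj⟩)
    rw [distToSet_privateColor_of_notMem hT (i := ⟨j, hj⟩) huj,
      distToSet_privateColor_of_notMem hT (i := ⟨j, hj⟩) (hu' j hj)] at this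
    dsimp only at this
    omega
  by_cases hu : ∃ i : EndBranch T, u ∈ endPalm T i
  swap
  · exact hout hx fun h ↦ hu ⟨⟨x, hx⟩, h⟩
  obtain ⟨i, hi⟩ := hu
  have hother {j : V} (hj : IsEndBranch T j) (hji : j ≠ i) : u ∉ endPalm T j :=
    fun h ↦ hji (hj.eq_of_mem_endPalm hT i.2 h hi)
  -- the palm at `i` only gives `dist u' i ≤ dist u i`; equality comes from another end-branch
  have hle : T.dist u' i ≤ T.dist u i := by
    have := h (privateColor D i)
    rw [distToSet_privateColor_of_notMem hT (hu' i i.2)] at this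
    have := distToSet_privateColor_le hT (κ := κ) (D := D) i u
    omega
  obtain ⟨j, hj, hji⟩ := hT.exists_isEndBranch_ne hu' i.2
  have e₁ := hout hj (hother hj hji)
  have e₂ := endPalm_isAttachedAt.dist_eq_add hT hi (hj.notMem_endPalm hji)
  have e₃ : T.dist u' j ≤ T.dist u' i + T.dist i j := hT.connected.dist_triangle
  by_cases hxi : x = i
  · subst hxi
    omega
  · exact hout hx (hother hx hxi)

theorem eq_of_forall_distToSet_treeColoring_eq (hex : ∃ v, IsEndBranch T v) : u = u' := by
  by_cases hu' : ∃ j : EndBranch T, u' ∈ endPalm T j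
  · by_cases hu : ∃ i : EndBranch T, u ∈ endPalm T i
    · obtain ⟨i, hi⟩ := hu
      obtain ⟨j, hj⟩ := hu'
      exact eq_of_mem_endPalm_of_forall_distToSet_eq hT h hi hj
    · refine (hT.eq_of_forall_isEndBranch_dist_eq (fun v hv hu' ↦ hu ⟨⟨v, hv⟩, hu'⟩) hex
        fun x hx ↦ ?_).symm
      exact dist_eq_of_forall_distToSet_eq hT (fun γ ↦ (h γ).symm)
        (fun v hv hu' ↦ hu ⟨⟨v, hv⟩, hu'⟩) hx
  · exact hT.eq_of_forall_isEndBranch_dist_eq (fun v hv hu ↦ hu' ⟨⟨v, hv⟩, hu⟩) hex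
      fun x hx ↦ dist_eq_of_forall_distToSet_eq hT h (fun v hv hu ↦ hu' ⟨⟨v, hv⟩, hu⟩) hx

end Resolving

section Count

variable {V : Type*} [Fintype V] {T : SimpleGraph V} [DecidableRel T.Adj]

theorem PalmColoring.card_privateColor_add_two {v : V} (P : PalmColoring T v) :
    Fintype.card P.PrivateColor + 2 = locatingChromaticNumber (T.induce (endPalm T v)) := by
  classical
  have hne : P.color (endPalmBase T v) ≠ P.color P.nbr :=
    P.isLocating.1 _ _ (induce_adj.mpr P.adj_nbr)
  let s : Finset (Fin _) := {P.color (endPalmBase T v), P.color P.nbr}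
  have hs : Fintype.card {m // m ∈ s} = 2 := by rw [Fintype.card_coe, Finset.card_pair hne]
  have hcompl := Fintype.card_subtype_compl (· ∈ s)
  have hle := Fintype.card_subtype_le (· ∈ s)
  rw [Fintype.card_fin] at hcompl hle
  have : Fintype.card P.PrivateColor = Fintype.card {m // m ∉ s} :=
    Fintype.card_congr (Equiv.subtypeEquivRight fun m ↦ by simp [s])
  omega

theorem card_palette (D : ∀ i : EndBranch T, PalmColoring T i) :
    (Fintype.card (Palette D) : ℤ) = 2 - 2 * Fintype.card (EndBranch T) +
      ∑ i : EndBranch T, (locatingChromaticNumber (T.induce (endPalm T i)) : ℤ) := by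
  have h (i : EndBranch T) : (locatingChromaticNumber (T.induce (endPalm T i)) : ℤ) =
      Fintype.card (D i).PrivateColor + 2 := by
    exact_mod_cast (D i).card_privateColor_add_two.symm
  simp only [h, Finset.sum_add_distrib, Finset.sum_const, Finset.card_univ, Palette,
    Fintype.card_sum, Fintype.card_sigma, Fintype.card_fin]
  push_cast
  ring

end Count

theorem finsum_mem_setOf_eq_sum {α M : Type*} [AddCommMonoid M] (p : α → Prop)
    [Fintype {a // p a}] (f : α → M) : ∑ᶠ a ∈ {a | p a}, f a = ∑ a : {a // p a}, f a := by
  let : Fintype {a | p a} := ‹Fintype {a // p a}›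
  rw [← finsum_set_coe_eq_finsum_mem, finsum_eq_sum_of_fintype]
  rfl

theorem ncard_setOf_eq_card {α : Type*} (p : α → Prop) [Fintype {a // p a}] :
    {a | p a}.ncard = Fintype.card {a // p a} := by
  rw [← Nat.card_coe_set_eq]
  exact Nat.card_eq_fintype_card (α := {a // p a})

/-- If `T` is a tree with at least one end-palm, and `P_1, …, P_b` are its
end-palms (indexed by its end-branches, `b ≥ 1`), then
`χ_L(T) ≤ 2 - 2b + ∑_{i=1}^b χ_L(P_i)`. -/
theorem locatingChromaticNumber_tree_le {V : Type*} [Fintype V]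
    (T : SimpleGraph V) [DecidableRel T.Adj] (hT : T.IsTree)
    (hb : ∃ v, IsEndBranch T v) :
    (locatingChromaticNumber T : ℤ) ≤
      2 - 2 * ({v | IsEndBranch T v}.ncard : ℤ) +
        ∑ᶠ v ∈ {v | IsEndBranch T v},
          (locatingChromaticNumber (T.induce (endPalm T v)) : ℤ) := by
  have D (i : EndBranch T) : PalmColoring T i := (PalmColoring.nonempty hT i.2).some
  have hle : locatingChromaticNumber T ≤ Fintype.card (Palette D) :=
    locatingChromaticNumber_le_card (treeColoring hT.coloringTwo D)
      (fun _ _ ↦ treeColoring_ne_of_adj hT) fun u u' huu ↦ by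
        by_contra! h
        exact huu (eq_of_forall_distToSet_treeColoring_eq hT h hb)
  rw [finsum_mem_setOf_eq_sum, ncard_setOf_eq_card, ← card_palette D]
  exact_mod_cast hle
end

section
/- Fix a positive integer k. The sequence n ↦ χ_L(S_n(k)) is unbounded: for every M there exists n ≥ 2 such that χ_L(S_n(k)) > M. -/
open SimpleGraph

/-- The vertex set of the palm `S_n(a_1, …, a_n)`: a hub `none` and, for each leg
`i : Fin n` (representing leg `i+1`), vertices `j : Fin (a (i+1))`
(vertex `some ⟨i, j⟩` represents `a_{i+1, j+1}`). -/
def PalmVert (n : ℕ) (a : ℕ → ℕ) : Type :=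
  Option ((i : Fin n) × Fin (a ((i : ℕ) + 1)))

/-- The palm `S_n(a_1, …, a_n)`: the star `K_{1,n}` whose `i`-th edge has been subdivided
`a_i - 1` times; the hub is joined to the first vertex of each leg, and consecutive
vertices along a leg are adjacent. -/
def Palm (n : ℕ) (a : ℕ → ℕ) : SimpleGraph (PalmVert n a) :=
  SimpleGraph.fromRel fun u v =>
    match u, v with
    | none, some ⟨_, j⟩ => (j : ℕ) = 0
    | some ⟨i, j⟩, some ⟨i', j'⟩ => (i : ℕ) = (i' : ℕ) ∧ (j' : ℕ) = (j : ℕ) + 1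
    | _, _ => False

/-!
An automorphism of `G` that preserves a locating colouring preserves the distance of every
vertex to every colour class, so it must fix every vertex. Swapping two legs of `S_n(k)` is an
automorphism; hence in a locating colouring with `m` colours the `n` legs carry pairwise
distinct colour sequences, so `n ≤ m ^ k`. Thus `χ_L(S_n(k)) ^ k ≥ n`.
-/

namespace SimpleGraph

variable {V W : Type*} {G : SimpleGraph V} {H : SimpleGraph W}

theorem edist_map_le (f : G →g H) (u v : V) : H.edist (f u) (f v) ≤ G.edist u v := by
  by_cases hr : G.Reachable u v
  · obtain ⟨p, hp⟩ := hr.exists_walk_length_eq_edist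
    calc H.edist (f u) (f v) ≤ (p.map f).length := edist_le _
      _ = G.edist u v := by rw [Walk.length_map, hp]
  · simp [edist_eq_top_of_not_reachable hr]

theorem Iso.edist_eq (φ : G ≃g H) (u v : V) : H.edist (φ u) (φ v) = G.edist u v := by
  refine le_antisymm (edist_map_le φ.toHom u v) ?_
  simpa using edist_map_le φ.symm.toHom (φ u) (φ v)

theorem Iso.dist_eq (φ : G ≃g H) (u v : V) : H.dist (φ u) (φ v) = G.dist u v := by
  simp only [dist, φ.edist_eq]

end SimpleGraph

section LocatingColoring

variable {V W : Type*} {G : SimpleGraph V} {H : SimpleGraph W}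

theorem distToSet_iso (φ : G ≃g H) (u : V) (S : Set V) :
    distToSet H (φ u) (φ '' S) = distToSet G u S := by
  simp only [distToSet, Set.image_image, φ.dist_eq]

theorem isLocatingColoring_of_injective (hG : G.Preconnected) {k : ℕ} {c : V → Fin k}
    (hc : Function.Injective c) : IsLocatingColoring G c := by
  refine ⟨fun u v huv => hc.ne huv.ne, fun u v huv => ⟨c u, ?_⟩⟩
  have hclass : c ⁻¹' {c u} = {u} := by
    ext x
    simp [hc.eq_iff]
  simp only [hclass, distToSet, Set.image_singleton, csInf_singleton, dist_self]
  exact ((hG v u).pos_dist_of_ne huv.symm).ne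

theorem exists_isLocatingColoring_locatingChromaticNumber [Finite V] (hG : G.Preconnected) :
    ∃ c : V → Fin (locatingChromaticNumber G), IsLocatingColoring G c := by
  obtain ⟨N, ⟨e⟩⟩ := Finite.exists_equiv_fin V
  exact Nat.sInf_mem (s := {k | ∃ c : V → Fin k, IsLocatingColoring G c})
    ⟨N, e, isLocatingColoring_of_injective hG e.injective⟩

theorem IsLocatingColoring.apply_eq_self_of_iso {k : ℕ} {c : V → Fin k}
    (hc : IsLocatingColoring G c) (φ : G ≃g G) (hφ : ∀ v, c (φ v) = c v) (u : V) : φ u = u := by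
  by_contra hne
  obtain ⟨i, hi⟩ := hc.2 _ _ hne
  have hclass : φ '' (c ⁻¹' {i}) = c ⁻¹' {i} := by
    ext x
    refine ⟨?_, fun hx => ⟨φ.symm x, ?_, φ.apply_symm_apply x⟩⟩
    · rintro ⟨y, hy, rfl⟩
      rwa [Set.mem_preimage, hφ]
    · rwa [Set.mem_preimage, ← hφ, φ.apply_symm_apply]
  apply hi
  calc distToSet G (φ u) (c ⁻¹' {i}) = distToSet G (φ u) (φ '' (c ⁻¹' {i})) := by rw [hclass]
    _ = distToSet G u (c ⁻¹' {i}) := distToSet_iso φ u _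

end LocatingColoring

namespace Palm

variable {n k : ℕ} {a : ℕ → ℕ}

instance : Finite (PalmVert n a) :=
  inferInstanceAs (Finite (Option _))

@[simp]
theorem adj_hub_leg {i : Fin n} {j : Fin (a (i + 1))} :
    (Palm n a).Adj none (some ⟨i, j⟩) ↔ (j : ℕ) = 0 :=
  (fromRel_adj _ _ _).trans (by simp [PalmVert])

@[simp]
theorem adj_leg_hub {i : Fin n} {j : Fin (a (i + 1))} :
    (Palm n a).Adj (some ⟨i, j⟩) none ↔ (j : ℕ) = 0 :=
  (fromRel_adj _ _ _).trans (by simp [PalmVert])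

@[simp]
theorem adj_leg_leg {i i' : Fin n} {j : Fin (a (i + 1))} {j' : Fin (a (i' + 1))} :
    (Palm n a).Adj (some ⟨i, j⟩) (some ⟨i', j'⟩) ↔
      i = i' ∧ ((j' : ℕ) = j + 1 ∨ (j : ℕ) = j' + 1) := by
  refine (fromRel_adj _ _ _).trans ?_
  rcases eq_or_ne i i' with rfl | hii
  · simp [PalmVert, Fin.ext_iff]
    omega
  · simp [PalmVert, hii, Fin.val_ne_of_ne hii, (Fin.val_ne_of_ne hii).symm]

theorem reachable_hub_leg (i : Fin n) (j : ℕ) (hj : j < a (i + 1)) :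
    (Palm n a).Reachable none (some ⟨i, ⟨j, hj⟩⟩) := by
  induction j with
  | zero => exact Adj.reachable (by simp)
  | succ j ih => exact (ih (by omega)).trans (Adj.reachable (by simp))

theorem preconnected (n : ℕ) (a : ℕ → ℕ) : (Palm n a).Preconnected := by
  have hub : ∀ v, (Palm n a).Reachable none v := by
    rintro (_ | ⟨i, j, hj⟩)
    · rfl
    · exact reachable_hub_leg i j hj
  exact fun u v => (hub u).symm.trans (hub v)

def permLegs (π : Equiv.Perm (Fin n)) : Palm n (fun _ => k) ≃g Palm n (fun _ => k) where
  toFun := Option.map fun x => ⟨π x.1, x.2⟩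
  invFun := Option.map fun x => ⟨π.symm x.1, x.2⟩
  left_inv := by rintro (_ | ⟨i, j⟩) <;> simp <;> rfl
  right_inv := by rintro (_ | ⟨i, j⟩) <;> simp <;> rfl
  map_rel_iff' := by
    rintro (_ | ⟨i, j⟩) (_ | ⟨i', j'⟩)
    · exact Iff.rfl
    · change (Palm n fun _ => k).Adj none (some ⟨π i', j'⟩) ↔ _
      simp
    · change (Palm n fun _ => k).Adj (some ⟨π i, j⟩) none ↔ _
      simp
    · change (Palm n fun _ => k).Adj (some ⟨π i, j⟩) (some ⟨π i', j'⟩) ↔ _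
      simp

theorem permLegs_leg (π : Equiv.Perm (Fin n)) (i : Fin n) (j : Fin k) :
    permLegs π (some ⟨i, j⟩) = some ⟨π i, j⟩ :=
  rfl

theorem injective_legColors_of_isLocatingColoring (hk : 0 < k) {m : ℕ}
    {c : PalmVert n (fun _ => k) → Fin m} (hc : IsLocatingColoring (Palm n fun _ => k) c) :
    Function.Injective fun (i : Fin n) (j : Fin k) => c (some ⟨i, j⟩) := by
  intro i i' hii'
  have hswap : ∀ v, c (permLegs (Equiv.swap i i') v) = c v := by
    rintro (_ | ⟨l, j⟩)
    · rfl
    rw [permLegs_leg]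
    rcases eq_or_ne l i with rfl | hli
    · rw [Equiv.swap_apply_left]
      exact (congrFun hii' j).symm
    rcases eq_or_ne l i' with rfl | hli'
    · rw [Equiv.swap_apply_right]
      exact congrFun hii' j
    rw [Equiv.swap_apply_of_ne_of_ne hli hli']
  have hfix := hc.apply_eq_self_of_iso (permLegs (Equiv.swap i i')) hswap (some ⟨i, ⟨0, hk⟩⟩)
  rw [permLegs_leg, Equiv.swap_apply_left] at hfix
  exact (by simpa [PalmVert] using hfix : i' = i).symm

theorem le_pow_of_isLocatingColoring (hk : 0 < k) {m : ℕ}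
    {c : PalmVert n (fun _ => k) → Fin m} (hc : IsLocatingColoring (Palm n fun _ => k) c) :
    n ≤ m ^ k := by
  simpa using Fintype.card_le_of_injective _ (injective_legColors_of_isLocatingColoring hk hc)

end Palm

/-- For a fixed positive integer `k`, the sequence `n ↦ χ_L(S_n(k))` is
unbounded: for every `M` there is `n ≥ 2` with `χ_L(S_n(k)) > M`. -/
theorem locatingChromaticNumber_regularPalm_unbounded (k : ℕ) (hk : 1 ≤ k) (M : ℕ) :
    ∃ n : ℕ, 2 ≤ n ∧ M < locatingChromaticNumber (Palm n (fun _ => k)) := by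
  set n := max 2 (M ^ k + 1)
  refine ⟨n, le_max_left _ _, ?_⟩
  obtain ⟨c, hc⟩ :=
    exists_isLocatingColoring_locatingChromaticNumber (Palm.preconnected n fun _ => k)
  refine lt_of_pow_lt_pow_left₀ k (Nat.zero_le _) ?_
  calc M ^ k < n := lt_max_of_lt_right (Nat.lt_succ_self _)
    _ ≤ _ := Palm.le_pow_of_isLocatingColoring hk hc
end
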